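/- For all integers m ≥ 2 and k ≥ 1, the product {2}·{m} divides {km+2}·{(k+1)m} in Z[s,t], and the quotient {km+2}{(k+1)m}/({2}{m}) — the Lucas–Coxeter–Fuss–Catalan analogue for the dihedral Coxeter group I_2(m) — is a polynomial in s and t all of whose coefficients are nonnegative integers. -/

import Mathlib

open MvPolynomial Finset

noncomputable section

/-- Polynomial ring ℤ[s,t] with s = X 0, t = X 1. -/
abbrev P2 : Type := MvPolynomial (Fin 2) ℤ

def ps : P2 := X 0
def pt : P2 := X 1

/-- The Lucas sequence of polynomials: {0}=0, {1}=1, {n}=s{n-1}+t{n-2}. -/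
def lucas : ℕ → P2
  | 0 => 0
  | 1 => 1
  | (n+2) => ps * lucas (n+1) + pt * lucas n

/-- The Lucastorial {n}! = {1}{2}⋯{n}. -/
def lucasFact (n : ℕ) : P2 := ∏ i ∈ Finset.range n, lucas (i+1)

/-- The d-divisible Lucastorial {n:d}! = {d}{2d}⋯{nd}. -/
def lucasFactD (d n : ℕ) : P2 := ∏ i ∈ Finset.range n, lucas (d*(i+1))

/-- A polynomial lies in ℕ[s,t]: all coefficients are nonnegative. -/
def Nonneg (p : P2) : Prop := ∀ m, 0 ≤ p.coeff m

/-- The fraction field ℤ(s,t). -/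
abbrev K : Type := FractionRing P2

def φ : P2 →+* K := algebraMap P2 K

def L (n : ℕ) : K := φ (lucas n)

def LFact (n : ℕ) : K := φ (lucasFact n)

def LFactD (d n : ℕ) : K := φ (lucasFactD d n)

/-- The Lucasnomial {n choose k}, as an element of the fraction field. -/
def lnom (n k : ℕ) : K := LFact n / (LFact k * LFact (n-k))

/-- The d-divisible Lucasnomial {n:d choose k:d}, as an element of the fraction field. -/
def lnomD (d n k : ℕ) : K := LFactD d n / (LFactD d k * LFactD d (n-k))

/-- The Lucas-Catalan number C_{n} = (1/{n+1}) {2n choose n}. -/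
def catL (n : ℕ) : K := lnom (2*n) n / L (n+1)

/-- The Lucas-Fuss-Catalan number C_{n,k} = (1/{kn+1}) {(k+1)n choose n}. -/
def fussCatL (n k : ℕ) : K := lnom ((k+1)*n) n / L (k*n+1)

/- The only identity needed is the addition formula {a+b+1} = {a+1}{b+1} + t{a}{b}. Iterating it
shows that {d} divides {dn} with a quotient in ℕ[s,t], and with a = m, b = m - 1 it factors
{2m} = {m}({m+1} + t{m-1}). If km is even, {2} divides {km+2} and {m} divides {(k+1)m}. If km is
odd, then m and k are odd: {2} divides both {m+1} and {m-1}, so {2}{m} divides {2m}, which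
divides {(k+1)m} because k + 1 is even. -/

theorem nonneg_add {p q : P2} (hp : Nonneg p) (hq : Nonneg q) : Nonneg (p + q) := fun m => by
  rw [coeff_add]
  exact add_nonneg (hp m) (hq m)

theorem nonneg_mul {p q : P2} (hp : Nonneg p) (hq : Nonneg q) : Nonneg (p * q) := fun m => by
  rw [coeff_mul]
  exact sum_nonneg fun _ _ => mul_nonneg (hp _) (hq _)

theorem nonneg_zero : Nonneg 0 := fun _ => by simp

theorem nonneg_one : Nonneg 1 := fun m => by
  classical
  rw [coeff_one]
  split_ifs <;> norm_num

theorem nonneg_X (i : Fin 2) : Nonneg (X i) := fun m => by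
  classical
  rw [coeff_X]
  split_ifs <;> norm_num

def NonnegDvd (a b : P2) : Prop := ∃ q : P2, Nonneg q ∧ b = q * a

namespace NonnegDvd

theorem trans {a b c : P2} (hab : NonnegDvd a b) (hbc : NonnegDvd b c) : NonnegDvd a c := by
  obtain ⟨p, hp, rfl⟩ := hab
  obtain ⟨q, hq, rfl⟩ := hbc
  exact ⟨q * p, nonneg_mul hq hp, by ring⟩

theorem mul_mul {a b c d : P2} (hab : NonnegDvd a b) (hcd : NonnegDvd c d) :
    NonnegDvd (a * c) (b * d) := by
  obtain ⟨p, hp, rfl⟩ := hab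
  obtain ⟨q, hq, rfl⟩ := hcd
  exact ⟨p * q, nonneg_mul hp hq, by ring⟩

theorem mul_left {a b c : P2} (hab : NonnegDvd a b) (hc : Nonneg c) : NonnegDvd a (c * b) := by
  obtain ⟨p, hp, rfl⟩ := hab
  exact ⟨c * p, nonneg_mul hc hp, by ring⟩

end NonnegDvd

@[simp] theorem lucas_zero : lucas 0 = 0 := rfl

@[simp] theorem lucas_one : lucas 1 = 1 := rfl

theorem lucas_add_two (n : ℕ) : lucas (n + 2) = ps * lucas (n + 1) + pt * lucas n := rfl

theorem nonneg_lucas (n : ℕ) : Nonneg (lucas n) := by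
  induction n using Nat.twoStepInduction with
  | zero => exact nonneg_zero
  | one => exact nonneg_one
  | more n ih ih' => exact nonneg_add (nonneg_mul (nonneg_X 0) ih') (nonneg_mul (nonneg_X 1) ih)

theorem lucas_add_add_one (a b : ℕ) :
    lucas (a + b + 1) = lucas (a + 1) * lucas (b + 1) + pt * lucas a * lucas b := by
  induction b generalizing a with
  | zero => simp
  | succ b ih =>
    rw [show a + (b + 1) + 1 = a + 1 + b + 1 by ring, ih, lucas_add_two, lucas_add_two]
    ring

theorem lucas_two_mul_add_two (n : ℕ) :
    lucas (2 * n + 2) = lucas (n + 1) * (lucas (n + 2) + pt * lucas n) := by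
  rw [show 2 * n + 2 = n + 1 + n + 1 by ring, lucas_add_add_one]
  ring

theorem nonnegDvd_lucas_mul (d n : ℕ) : NonnegDvd (lucas d) (lucas (d * n)) := by
  induction n with
  | zero => exact ⟨0, nonneg_zero, by simp⟩
  | succ n ih =>
    obtain ⟨q, hq, hqd⟩ := ih
    rcases d with _ | e
    · exact ⟨0, nonneg_zero, by simp⟩
    refine ⟨lucas ((e + 1) * n + 1) + pt * q * lucas e,
      nonneg_add (nonneg_lucas _) (nonneg_mul (nonneg_mul (nonneg_X 1) hq) (nonneg_lucas _)), ?_⟩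
    rw [show (e + 1) * (n + 1) = (e + 1) * n + e + 1 by ring, lucas_add_add_one, hqd]
    ring

theorem nonnegDvd_lucas_two_mul_of_odd {m : ℕ} (hm : Odd m) :
    NonnegDvd (lucas 2 * lucas m) (lucas (2 * m)) := by
  obtain ⟨j, rfl⟩ := hm
  obtain ⟨p, hp, hpj⟩ := nonnegDvd_lucas_mul 2 (j + 1)
  obtain ⟨q, hq, hqj⟩ := nonnegDvd_lucas_mul 2 j
  refine ⟨p + pt * q, nonneg_add hp (nonneg_mul (nonneg_X 1) hq), ?_⟩
  rw [show 2 * (2 * j + 1) = 2 * (2 * j) + 2 by ring, lucas_two_mul_add_two,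
    show 2 * j + 2 = 2 * (j + 1) by ring, hpj, hqj]
  ring

theorem coxeterFussCatalan_I2_general (m k : ℕ) :
    ∃ p : P2, Nonneg p ∧
      lucas (k*m+2) * lucas ((k+1)*m) = p * (lucas 2 * lucas m) := by
  rcases Nat.even_or_odd (k * m) with ⟨j, hj⟩ | hkm
  · rw [show k * m + 2 = 2 * (j + 1) by omega, mul_comm (k + 1)]
    exact (nonnegDvd_lucas_mul 2 (j + 1)).mul_mul (nonnegDvd_lucas_mul m (k + 1))
  · obtain ⟨⟨j, rfl⟩, hm⟩ := Nat.odd_mul.mp hkm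
    rw [show (2 * j + 1 + 1) * m = 2 * m * (j + 1) by ring]
    exact ((nonnegDvd_lucas_two_mul_of_odd hm).trans
      (nonnegDvd_lucas_mul (2 * m) (j + 1))).mul_left (nonneg_lucas _)

/-- for m ≥ 2, k ≥ 1, {2}{m} divides {km+2}{(k+1)m} with quotient
(Cat^{(k)} I_2(m)) in ℕ[s,t]. -/
theorem coxeterFussCatalan_I2 (m k : ℕ) (hm : 2 ≤ m) (hk : 1 ≤ k) :
    ∃ p : P2, Nonneg p ∧
      lucas (k*m+2) * lucas ((k+1)*m) = p * (lucas 2 * lucas m) :=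
  coxeterFussCatalan_I2_general m k
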